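/- Let k₊ > 0, θ_x ∈ (0, π/2), and define the steepest descent path D := {ζ ∈ ℂ : Re ζ = θ_x − sgn(Im ζ)·arccos(1/cosh(Im ζ))}, where sgn(0) := 0 (note arccos(1/cosh 0) = 0, so θ_x ∈ D). Then the restriction to ℝ of the function ζ(s) := 2·arcsin(Q(s)) + θ_x is a bijection from ℝ onto D; moreover ζ(0) = θ_x, Im ζ(s) < 0 for s > 0, and Im ζ(s) > 0 for s < 0. -/

import Mathlib

/-
Put `t = s / √(2k₊)`, so that `Q(s) = t e^{-iπ/4}`. Writing `u = x + iy`, `sin u` lies on the line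
`ℝ e^{-iπ/4}` iff `tan x = -tanh y`, which singles out `u(y) = arctan (-tanh y) + iy`, and then
`sin u(y) = τ(y) e^{-iπ/4}` with `τ(y) = -√2 sinh y / √(1 + tanh² y)`. Since `|Re u(y)| < π/2`,
the principal arcsin inverts `sin` there, so `ζ(√(2k₊) τ(y)) = 2u(y) + θx`. The function `τ` is
continuous, odd, of sign opposite to `y` and satisfies `|τ| ≥ |sinh|`, so it maps `ℝ` onto `ℝ`;
hence `ζ(ℝ) = {2u(y) + θx : y ∈ ℝ}`, which is `D` because
`sgn(2y) arccos (1 / cosh 2y) = 2 arctan (tanh y)`.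
Injectivity needs nothing of this: `sin ∘ arcsin = id` everywhere.
-/

open Complex Set

noncomputable section

/-- Principal square root on ℂ via the principal power. -/
def csqrt (z : ℂ) : ℂ := z ^ (1/2 : ℂ)

def Pf (kp : ℝ) (s : ℂ) : ℂ := csqrt (1 - s ^ 2 / (2 * (kp : ℂ) * Complex.I))

def Qf (kp : ℝ) (s : ℂ) : ℂ :=
  s * Complex.exp (-(Real.pi : ℂ) / 4 * Complex.I) / (Real.sqrt (2 * kp) : ℂ)

/-- Principal branch of arcsin on ℂ. -/
def arcsinC (w : ℂ) : ℂ := -Complex.I * Complex.log (Complex.I * w + csqrt (1 - w ^ 2))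

def zetaF (kp θx : ℝ) (s : ℂ) : ℂ := 2 * arcsinC (Qf kp s) + (θx : ℂ)

/-- The steepest descent path through `θx`. -/
def descentPath (θx : ℝ) : Set ℂ :=
  {ζ : ℂ | ζ.re = θx - Real.sign ζ.im * Real.arccos (1 / Real.cosh ζ.im)}

lemma csqrt_sq {v : ℂ} (hv : 0 < v.re) : csqrt (v ^ 2) = v := by
  simpa [csqrt] using sq_cpow_two_inv hv

lemma csqrt_pow_two (z : ℂ) : csqrt z ^ 2 = z := by
  simp [csqrt]

theorem sin_arcsinC (w : ℂ) : sin (arcsinC w) = w := by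
  set r := csqrt (1 - w ^ 2)
  have hr : r ^ 2 = 1 - w ^ 2 := csqrt_pow_two _
  have hv : (I * w + r) * (-I * w + r) = 1 := by linear_combination hr - w ^ 2 * I_sq
  have hexp : exp (arcsinC w * I) = I * w + r := by
    rw [arcsinC, show -I * log (I * w + r) * I = log (I * w + r) by ring_nf; simp [I_sq],
      exp_log (left_ne_zero_of_mul_eq_one hv)]
  rw [sin, neg_mul, exp_neg, hexp, inv_eq_of_mul_eq_one_right hv]
  linear_combination (-w) * I_sq

theorem arcsinC_sin {z : ℂ} (hz : |z.re| < Real.pi / 2) : arcsinC (sin z) = z := by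
  obtain ⟨hlo, hhi⟩ := abs_lt.mp hz
  have hcos : 0 < (cos z).re := by
    rw [← re_add_im z, cos_add_mul_I, ← ofReal_cos, ← ofReal_cosh, ← ofReal_sin, ← ofReal_sinh]
    simp only [sub_re, mul_re, ofReal_re, ofReal_im, I_re, I_im, mul_im]
    simpa using mul_pos (Real.cos_pos_of_mem_Ioo ⟨hlo, hhi⟩) (Real.cosh_pos z.im)
  have hsq : 1 - sin z ^ 2 = cos z ^ 2 := by linear_combination -(sin_sq_add_cos_sq z)
  rw [arcsinC, hsq, csqrt_sq hcos, show I * sin z + cos z = exp (z * I) by rw [exp_mul_I]; ring,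
    log_exp (by rw [mul_I_im]; linarith [Real.pi_pos]) (by rw [mul_I_im]; linarith [Real.pi_pos])]
  linear_combination (-z) * I_sq

def halfPath (y : ℝ) : ℂ := (Real.arctan (-Real.tanh y) : ℂ) + y * I

@[simp]
lemma halfPath_re (y : ℝ) : (halfPath y).re = Real.arctan (-Real.tanh y) := by
  simp only [halfPath, add_re, ofReal_re, mul_re, I_re, I_im, ofReal_im]
  ring

@[simp]
lemma halfPath_im (y : ℝ) : (halfPath y).im = y := by
  simp only [halfPath, add_im, ofReal_re, mul_im, I_re, I_im, ofReal_im]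
  ring

def halfPathCoord (y : ℝ) : ℝ := -(Real.sqrt 2 * Real.sinh y / Real.sqrt (1 + Real.tanh y ^ 2))

lemma exp_neg_pi_div_four_mul_I :
    exp (-(Real.pi : ℂ) / 4 * I) = (Real.sqrt 2 / 2 : ℝ) * (1 - I) := by
  rw [show -(Real.pi : ℂ) / 4 * I = ((-(Real.pi / 4) : ℝ) : ℂ) * I by push_cast; ring,
    exp_mul_I, ← ofReal_cos, ← ofReal_sin, Real.cos_neg, Real.sin_neg, Real.cos_pi_div_four,
    Real.sin_pi_div_four]
  push_cast
  ring

theorem sin_halfPath (y : ℝ) :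
    sin (halfPath y) = halfPathCoord y * exp (-(Real.pi : ℂ) / 4 * I) := by
  have hc : Real.cosh y ≠ 0 := (Real.cosh_pos y).ne'
  have h2 : Real.sqrt 2 ^ 2 = 2 := Real.sq_sqrt zero_le_two
  have hT : Real.tanh y * Real.cosh y = Real.sinh y := by
    rw [Real.tanh_eq_sinh_div_cosh, div_mul_cancel₀ _ hc]
  rw [halfPath, sin_add_mul_I, ← ofReal_sin, ← ofReal_cos, ← ofReal_cosh, ← ofReal_sinh,
    Real.sin_arctan, Real.cos_arctan, exp_neg_pi_div_four_mul_I, halfPathCoord]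
  apply Complex.ext <;>
    simp only [add_re, add_im, mul_re, mul_im, ofReal_re, ofReal_im, I_re, I_im, sub_re, sub_im,
      one_re, one_im] <;>
    field_simp
  · linear_combination -2 * hT + Real.sinh y * h2
  · linear_combination -Real.sinh y * h2

lemma halfPathCoord_neg (y : ℝ) : halfPathCoord (-y) = -halfPathCoord y := by
  simp only [halfPathCoord, Real.sinh_neg, Real.tanh_neg, neg_sq]
  ring

lemma halfPathCoord_pos_iff {y : ℝ} : 0 < halfPathCoord y ↔ y < 0 := by
  have hn : 0 < Real.sqrt (1 + Real.tanh y ^ 2) := by positivity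
  rw [halfPathCoord, neg_pos, div_lt_iff₀ hn, zero_mul, ← Real.sinh_neg_iff (x := y)]
  exact ⟨fun h => neg_of_mul_neg_right h (by positivity),
    fun h => mul_neg_of_pos_of_neg (by positivity) h⟩

lemma halfPathCoord_neg_iff {y : ℝ} : halfPathCoord y < 0 ↔ 0 < y := by
  rw [← neg_pos, ← halfPathCoord_neg, halfPathCoord_pos_iff, neg_lt_zero]

lemma abs_sinh_le_abs_halfPathCoord (y : ℝ) : |Real.sinh y| ≤ |halfPathCoord y| := by
  have hn : 0 < Real.sqrt (1 + Real.tanh y ^ 2) := by positivity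
  have hle : Real.sqrt (1 + Real.tanh y ^ 2) ≤ Real.sqrt 2 := by
    gcongr
    nlinarith [abs_lt.mp (Real.abs_tanh_lt_one y)]
  rw [halfPathCoord, abs_neg, abs_div, abs_mul, abs_of_pos hn,
    abs_of_pos (by positivity : (0:ℝ) < Real.sqrt 2), le_div_iff₀ hn, mul_comm]
  exact mul_le_mul_of_nonneg_right hle (abs_nonneg _)

lemma continuous_halfPathCoord : Continuous halfPathCoord := by
  have htanh : Continuous Real.tanh := by
    rw [show Real.tanh = fun y => Real.sinh y / Real.cosh y from funext Real.tanh_eq_sinh_div_cosh]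
    exact Real.continuous_sinh.div Real.continuous_cosh fun y => (Real.cosh_pos y).ne'
  unfold halfPathCoord
  fun_prop (disch := intro y; positivity)

theorem halfPathCoord_surjective : Function.Surjective halfPathCoord := by
  intro t
  set b := Real.arsinh |t|
  have hb : 0 ≤ b := Real.arsinh_nonneg_iff.mpr (abs_nonneg t)
  have hτb : halfPathCoord b ≤ -|t| := by
    have h := abs_sinh_le_abs_halfPathCoord b
    rw [Real.sinh_arsinh, abs_abs,
      abs_of_nonpos (not_lt.mp (halfPathCoord_pos_iff.not.mpr hb.not_gt))] at h
    linarith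
  obtain ⟨y, -, hy⟩ := intermediate_value_Icc' (neg_le_self hb)
    continuous_halfPathCoord.continuousOn
    ⟨hτb.trans (neg_abs_le t), by rw [halfPathCoord_neg]; linarith [le_abs_self t]⟩
  exact ⟨y, hy⟩

lemma arccos_inv_cosh_two_mul {y : ℝ} (hy : 0 ≤ y) :
    Real.arccos (1 / Real.cosh (2 * y)) = 2 * Real.arctan (Real.tanh y) := by
  have hc := Real.cosh_pos y
  have hcos : Real.cos (2 * Real.arctan (Real.tanh y)) = 1 / Real.cosh (2 * y) := by
    have h2 : Real.sqrt (1 + Real.tanh y ^ 2) ^ 2 = 1 + Real.tanh y ^ 2 :=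
      Real.sq_sqrt (by positivity)
    rw [Real.cos_two_mul, Real.cos_arctan, div_pow, one_pow, h2, Real.tanh_eq_sinh_div_cosh,
      Real.cosh_two_mul]
    field_simp
    linear_combination Real.cosh_sq y
  have htanh : 0 ≤ Real.tanh y := by
    rw [Real.tanh_eq_sinh_div_cosh]
    exact div_nonneg (Real.sinh_nonneg_iff.mpr hy) hc.le
  rw [← hcos, Real.arccos_cos]
  · linarith [Real.arctan_nonneg.mpr htanh]
  · linarith [Real.arctan_lt_pi_div_two (Real.tanh y)]

lemma sign_mul_arccos_inv_cosh_two_mul (y : ℝ) :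
    Real.sign (2 * y) * Real.arccos (1 / Real.cosh (2 * y)) = 2 * Real.arctan (Real.tanh y) := by
  rcases lt_trichotomy y 0 with hy | rfl | hy
  · have h := arccos_inv_cosh_two_mul (neg_nonneg.mpr hy.le)
    rw [mul_neg, Real.cosh_neg, Real.tanh_neg, Real.arctan_neg] at h
    rw [Real.sign_of_neg (by linarith), h]
    ring
  · simp
  · rw [Real.sign_of_pos (by linarith), one_mul, arccos_inv_cosh_two_mul hy.le]

lemma im_two_mul_halfPath_add (θx y : ℝ) : (2 * halfPath y + θx).im = 2 * y := by simp

theorem descentPath_eq_range (θx : ℝ) :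
    descentPath θx = range (fun y => 2 * halfPath y + θx) := by
  have hre : ∀ y, (2 * halfPath y + θx).re
      = θx - Real.sign (2 * y) * Real.arccos (1 / Real.cosh (2 * y)) := fun y => by
    simp only [add_re, mul_re, re_ofNat, im_ofNat, halfPath_re, halfPath_im, ofReal_re,
      zero_mul, sub_zero, sign_mul_arccos_inv_cosh_two_mul, Real.arctan_neg]
    ring
  ext ζ
  constructor
  · intro hζ
    refine ⟨ζ.im / 2, Complex.ext ?_ ?_⟩
    · rw [hre, mul_div_cancel₀ _ two_ne_zero]
      exact hζ.symm
    · rw [im_two_mul_halfPath_add, mul_div_cancel₀ _ two_ne_zero]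
  · rintro ⟨y, rfl⟩
    change _ = _
    rw [hre, im_two_mul_halfPath_add]

theorem zetaF_sqrt_mul_halfPathCoord {kp : ℝ} (hkp : 0 < kp) (θx y : ℝ) :
    zetaF kp θx ((Real.sqrt (2 * kp) * halfPathCoord y : ℝ) : ℂ) = 2 * halfPath y + θx := by
  have hc : (Real.sqrt (2 * kp) : ℂ) ≠ 0 := ofReal_ne_zero.mpr (by positivity)
  have hQ : Qf kp ((Real.sqrt (2 * kp) * halfPathCoord y : ℝ) : ℂ) = sin (halfPath y) := by
    rw [Qf, sin_halfPath]
    push_cast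
    field_simp
  have hre : |(halfPath y).re| < Real.pi / 2 := by
    rw [halfPath_re, abs_lt]
    exact ⟨Real.neg_pi_div_two_lt_arctan _, Real.arctan_lt_pi_div_two _⟩
  rw [zetaF, hQ, arcsinC_sin hre]

theorem zetaF_injective {kp : ℝ} (hkp : 0 < kp) (θx : ℝ) : Function.Injective (zetaF kp θx) := by
  have hc : (Real.sqrt (2 * kp) : ℂ) ≠ 0 := ofReal_ne_zero.mpr (by positivity)
  intro a b h
  have harcsin : arcsinC (Qf kp a) = arcsinC (Qf kp b) := by simpa [zetaF] using h
  have hQ : Qf kp a = Qf kp b := by rw [← sin_arcsinC (Qf kp a), harcsin, sin_arcsinC]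
  rw [Qf, Qf, mul_div_assoc, mul_div_assoc] at hQ
  exact mul_right_cancel₀ (div_ne_zero (exp_ne_zero _) hc) hQ

lemma zetaF_zero (kp θx : ℝ) : zetaF kp θx 0 = θx := by
  simp [zetaF, Qf, arcsinC, csqrt]

theorem statement16_general (kp θx : ℝ) (hkp : 0 < kp) :
    Set.BijOn (fun s : ℝ => zetaF kp θx (s : ℂ)) Set.univ (descentPath θx) ∧
    zetaF kp θx 0 = (θx : ℂ) ∧
    (∀ s : ℝ, 0 < s → (zetaF kp θx (s : ℂ)).im < 0) ∧
    (∀ s : ℝ, s < 0 → 0 < (zetaF kp θx (s : ℂ)).im) := by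
  have hc : 0 < Real.sqrt (2 * kp) := by positivity
  have hζ := zetaF_sqrt_mul_halfPathCoord hkp θx
  have hparam : ∀ s : ℝ, ∃ y, s = Real.sqrt (2 * kp) * halfPathCoord y := fun s => by
    obtain ⟨y, hy⟩ := halfPathCoord_surjective (s / Real.sqrt (2 * kp))
    exact ⟨y, by rw [hy, mul_div_cancel₀ _ hc.ne']⟩
  rw [descentPath_eq_range]
  refine ⟨⟨?_, ((zetaF_injective hkp θx).comp ofReal_injective).injOn, ?_⟩, zetaF_zero kp θx,
    fun s hs => ?_, fun s hs => ?_⟩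
  · rintro s -
    obtain ⟨y, rfl⟩ := hparam s
    exact ⟨y, (hζ y).symm⟩
  · rintro _ ⟨y, rfl⟩
    exact ⟨_, mem_univ _, hζ y⟩
  · obtain ⟨y, rfl⟩ := hparam s
    rw [hζ, im_two_mul_halfPath_add]
    linarith [halfPathCoord_pos_iff.mp (pos_of_mul_pos_right hs hc.le)]
  · obtain ⟨y, rfl⟩ := hparam s
    rw [hζ, im_two_mul_halfPath_add]
    linarith [halfPathCoord_neg_iff.mp (neg_of_mul_neg_right hs hc.le)]

theorem statement16 (kp θx : ℝ) (hkp : 0 < kp) (hθ : θx ∈ Set.Ioo 0 (Real.pi / 2)) :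
    Set.BijOn (fun s : ℝ => zetaF kp θx (s : ℂ)) Set.univ (descentPath θx) ∧
    zetaF kp θx 0 = (θx : ℂ) ∧
    (∀ s : ℝ, 0 < s → (zetaF kp θx (s : ℂ)).im < 0) ∧
    (∀ s : ℝ, s < 0 → 0 < (zetaF kp θx (s : ℂ)).im) :=
  statement16_general kp θx hkp
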